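/- Let G = (V,E) be a graph with V = {v_1,…,v_n}, and let H be the graph with vertex set V_H = {v_i^1, v_i^2, w_i^1, w_i^2, z_i : i ∈ [n]} and edge set E_H = {w_i^1 v_j^1, w_i^2 v_j^2 : v_j ∈ N_G[v_i]} ∪ {v_i^1 v_j^1, v_i^2 v_j^2, z_i z_j : 1 ≤ i < j ≤ n} ∪ {v_i^1 z_j, v_i^2 z_j : i ∈ [n], j ∈ [n]}. If D_sp is any semipaired dominating set of H, then G has a dominating set of cardinality at most |D_sp|/2. Consequently, γ(G) ≤ γ_pr2(H)/2, and combined with the reverse inequality, γ_pr2(H) = 2·γ(G). -/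

import Mathlib

/-- `D` is a dominating set of `G`. -/
def IsDomSet {V : Type*} (G : SimpleGraph V) (D : Finset V) : Prop :=
  ∀ v, v ∉ D → ∃ u ∈ D, G.Adj u v

/-- `D` is a semipaired dominating set of `G`: a dominating set that can be partitioned
into 2-element subsets (given by a fixed-point-free involution on `D`) such that the two
vertices in each pair are at distance at most 2 (adjacent or having a common neighbor). -/
def IsSemiPD {V : Type*} (G : SimpleGraph V) (D : Finset V) : Prop :=
  IsDomSet G D ∧ ∃ f : V → V, ∀ v ∈ D, f v ∈ D ∧ f v ≠ v ∧ f (f v) = v ∧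
    (G.Adj v (f v) ∨ ∃ w, G.Adj v w ∧ G.Adj (f v) w)

/-- The domination number `γ(G)`. -/
noncomputable def gamma {V : Type*} (G : SimpleGraph V) : ℕ :=
  sInf {k | ∃ D : Finset V, IsDomSet G D ∧ D.card = k}

/-- The semipaired domination number `γ_pr2(G)`. -/
noncomputable def gammaPr2 {V : Type*} (G : SimpleGraph V) : ℕ :=
  sInf {k | ∃ D : Finset V, IsSemiPD G D ∧ D.card = k}

/-- Vertices of the graph `H` constructed from a graph `G` with `n` vertices:
`V_H = {v_i^1, v_i^2, w_i^1, w_i^2, z_i : i ∈ [n]}`. -/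
inductive WV (n : ℕ) where
  | v1 : Fin n → WV n
  | v2 : Fin n → WV n
  | w1 : Fin n → WV n
  | w2 : Fin n → WV n
  | z : Fin n → WV n
deriving DecidableEq

/-- The defining relation of `H`:
`E_H = {w_i^1 v_j^1, w_i^2 v_j^2 : v_j ∈ N_G[v_i]} ∪
{v_i^1 v_j^1, v_i^2 v_j^2, z_i z_j : i < j} ∪ {v_i^1 z_j, v_i^2 z_j : i, j ∈ [n]}`. -/
def wRel {n : ℕ} (G : SimpleGraph (Fin n)) : WV n → WV n → Prop
  | .w1 i, .v1 j => i = j ∨ G.Adj i j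
  | .w2 i, .v2 j => i = j ∨ G.Adj i j
  | .v1 i, .v1 j => i ≠ j
  | .v2 i, .v2 j => i ≠ j
  | .z i, .z j => i ≠ j
  | .v1 _, .z _ => True
  | .v2 _, .z _ => True
  | _, _ => False

/-- The graph `H` constructed from `G`. -/
def bigW {n : ℕ} (G : SimpleGraph (Fin n)) : SimpleGraph (WV n) :=
  SimpleGraph.fromRel (wRel G)

/- The part of a dominating set of `H` on either side `{v_i^k, w_i^k : i ∈ [n]}` (`k = 1, 2`)
projects to a dominating set of `G`, since `w_i^k` can only be dominated by itself or by some `v_j^k`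
with `v_j ∈ N_G[v_i]`. The two sides are disjoint, so one of the projections has at most half as
many vertices. Conversely, for a dominating set `D` of `G` the vertices `v_i^1, v_i^2` (`i ∈ D`)
form a semipaired dominating set of `H`, pairing `v_i^1` with `v_i^2` through their common
neighbour `z_i`. -/

open Finset

section Domination

variable {V : Type*} {G : SimpleGraph V} {D : Finset V}

theorem IsDomSet.exists_mem_eq_or_adj (hD : IsDomSet G D) (v : V) :
    ∃ u ∈ D, u = v ∨ G.Adj u v := by
  by_cases hv : v ∈ D
  · exact ⟨v, hv, Or.inl rfl⟩
  · obtain ⟨u, hu, huv⟩ := hD v hv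
    exact ⟨u, hu, Or.inr huv⟩

theorem IsDomSet.image_filter {W : Type*} [DecidableEq V] {H : SimpleGraph W} {D : Finset W}
    (hD : IsDomSet H D) (p : W → Prop) [DecidablePred p] (π : W → V) (w : V → W)
    (hw : ∀ v, p (w v) ∧ π (w v) = v)
    (hadj : ∀ v x, H.Adj x (w v) → p x ∧ (π x = v ∨ G.Adj (π x) v)) :
    IsDomSet G ((D.filter p).image π) := by
  intro v hv
  have hwD : w v ∉ D := fun h => hv (mem_image.2 ⟨w v, mem_filter.2 ⟨h, (hw v).1⟩, (hw v).2⟩)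
  obtain ⟨x, hx, hxw⟩ := hD _ hwD
  obtain ⟨hpx, rfl | hG⟩ := hadj v x hxw
  · exact absurd (mem_image_of_mem π (mem_filter.2 ⟨hx, hpx⟩)) hv
  · exact ⟨π x, mem_image_of_mem π (mem_filter.2 ⟨hx, hpx⟩), hG⟩

theorem gamma_le_card (hD : IsDomSet G D) : gamma G ≤ #D :=
  Nat.sInf_le ⟨D, hD, rfl⟩

theorem exists_isDomSet_card_eq_gamma [Fintype V] (G : SimpleGraph V) :
    ∃ D, IsDomSet G D ∧ #D = gamma G :=
  Nat.sInf_mem (s := {k | ∃ D : Finset V, IsDomSet G D ∧ #D = k})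
    ⟨_, univ, fun v hv => absurd (mem_univ v) hv, rfl⟩

theorem gammaPr2_le_card (hD : IsSemiPD G D) : gammaPr2 G ≤ #D :=
  Nat.sInf_le ⟨D, hD, rfl⟩

theorem exists_isSemiPD_card_eq_gammaPr2 (hD : IsSemiPD G D) :
    ∃ D', IsSemiPD G D' ∧ #D' = gammaPr2 G :=
  Nat.sInf_mem (s := {k | ∃ D : Finset V, IsSemiPD G D ∧ #D = k}) ⟨_, D, hD, rfl⟩

end Domination

namespace WV

variable {n : ℕ}

def idx : WV n → Fin n
  | v1 i | v2 i | w1 i | w2 i | z i => i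

def side : WV n → ℕ
  | v1 _ | w1 _ => 1
  | v2 _ | w2 _ => 2
  | z _ => 0

def swap : WV n → WV n
  | v1 i => v2 i
  | v2 i => v1 i
  | w1 i => w2 i
  | w2 i => w1 i
  | z i => z i

end WV

section BigW

open WV

variable {n : ℕ} {G : SimpleGraph (Fin n)}

theorem bigW_adj_w1 {x : WV n} {i : Fin n} :
    (bigW G).Adj x (w1 i) ↔ ∃ j, x = v1 j ∧ (j = i ∨ G.Adj j i) := by
  cases x <;> simp [bigW, wRel, eq_comm, G.adj_comm]

theorem bigW_adj_w2 {x : WV n} {i : Fin n} :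
    (bigW G).Adj x (w2 i) ↔ ∃ j, x = v2 j ∧ (j = i ∨ G.Adj j i) := by
  cases x <;> simp [bigW, wRel, eq_comm, G.adj_comm]

theorem bigW_adj_v1_v1 {i j : Fin n} (h : i ≠ j) : (bigW G).Adj (v1 i) (v1 j) := by
  simp [bigW, wRel, h]

theorem bigW_adj_v2_v2 {i j : Fin n} (h : i ≠ j) : (bigW G).Adj (v2 i) (v2 j) := by
  simp [bigW, wRel, h]

theorem bigW_adj_v1_z (i j : Fin n) : (bigW G).Adj (v1 i) (z j) := by
  simp [bigW, wRel]

theorem bigW_adj_v2_z (i j : Fin n) : (bigW G).Adj (v2 i) (z j) := by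
  simp [bigW, wRel]

theorem isDomSet_image_filter_side_one {Dsp : Finset (WV n)} (h : IsDomSet (bigW G) Dsp) :
    IsDomSet G ((Dsp.filter (·.side = 1)).image idx) :=
  h.image_filter _ idx w1 (fun _ => ⟨rfl, rfl⟩) fun _ _ hx => by
    obtain ⟨j, rfl, hj⟩ := bigW_adj_w1.1 hx
    exact ⟨rfl, hj⟩

theorem isDomSet_image_filter_side_two {Dsp : Finset (WV n)} (h : IsDomSet (bigW G) Dsp) :
    IsDomSet G ((Dsp.filter (·.side = 2)).image idx) :=
  h.image_filter _ idx w2 (fun _ => ⟨rfl, rfl⟩) fun _ _ hx => by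
    obtain ⟨j, rfl, hj⟩ := bigW_adj_w2.1 hx
    exact ⟨rfl, hj⟩

theorem card_filter_side_one_add_card_filter_side_two (Dsp : Finset (WV n)) :
    #(Dsp.filter (·.side = 1)) + #(Dsp.filter (·.side = 2)) ≤ #Dsp :=
  calc #(Dsp.filter (·.side = 1)) + #(Dsp.filter (·.side = 2))
      ≤ #(Dsp.filter (·.side = 1)) + #(Dsp.filter (¬ ·.side = 1)) := by
        gcongr
        exact fun x hx => by simp_all
    _ = #Dsp := card_filter_add_card_filter_not _

theorem exists_isDomSet_two_mul_card_le {Dsp : Finset (WV n)} (h : IsDomSet (bigW G) Dsp) :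
    ∃ D : Finset (Fin n), IsDomSet G D ∧ 2 * #D ≤ #Dsp := by
  set D₁ := (Dsp.filter (·.side = 1)).image idx
  set D₂ := (Dsp.filter (·.side = 2)).image idx
  have hsum : #D₁ + #D₂ ≤ #Dsp :=
    (add_le_add card_image_le card_image_le).trans
      (card_filter_side_one_add_card_filter_side_two Dsp)
  rcases le_total #D₁ #D₂ with hle | hle
  · exact ⟨D₁, isDomSet_image_filter_side_one h, by omega⟩
  · exact ⟨D₂, isDomSet_image_filter_side_two h, by omega⟩

theorem isSemiPD_bigW_image_v1_union_image_v2 {D : Finset (Fin n)} (hD : IsDomSet G D) :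
    IsSemiPD (bigW G) (D.image v1 ∪ D.image v2) := by
  refine ⟨fun x hx => ?_, swap, ?_⟩
  · obtain ⟨i, hi, hix⟩ := hD.exists_mem_eq_or_adj x.idx
    cases x with
    | v1 j =>
      rcases hix with rfl | hij
      · simp [hi] at hx
      · exact ⟨v1 i, by simp [hi], bigW_adj_v1_v1 hij.ne⟩
    | v2 j =>
      rcases hix with rfl | hij
      · simp [hi] at hx
      · exact ⟨v2 i, by simp [hi], bigW_adj_v2_v2 hij.ne⟩
    | w1 j => exact ⟨v1 i, by simp [hi], bigW_adj_w1.2 ⟨i, rfl, hix⟩⟩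
    | w2 j => exact ⟨v2 i, by simp [hi], bigW_adj_w2.2 ⟨i, rfl, hix⟩⟩
    | z j => exact ⟨v1 i, by simp [hi], bigW_adj_v1_z i j⟩
  · intro x hx
    simp only [mem_union, mem_image] at hx
    rcases hx with ⟨i, hi, rfl⟩ | ⟨i, hi, rfl⟩
    · exact ⟨by simp [swap, hi], by simp [swap], rfl,
        Or.inr ⟨z i, bigW_adj_v1_z i i, bigW_adj_v2_z i i⟩⟩
    · exact ⟨by simp [swap, hi], by simp [swap], rfl,
        Or.inr ⟨z i, bigW_adj_v2_z i i, bigW_adj_v1_z i i⟩⟩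

theorem card_image_v1_union_image_v2 (D : Finset (Fin n)) :
    #(D.image v1 ∪ D.image v2) = 2 * #D := by
  rw [card_union_of_disjoint (by simp [disjoint_left]),
    card_image_of_injective _ fun _ _ => v1.inj, card_image_of_injective _ fun _ _ => v2.inj,
    two_mul]

end BigW

/-- Let `H` be the graph constructed from `G` in the approximation-hardness reduction.
If `D_sp` is any semipaired dominating set of `H`, then `G` has a dominating set of
cardinality at most `|D_sp| / 2`. Consequently `γ(G) ≤ γ_pr2(H) / 2`, and combined
with the reverse inequality, `γ_pr2(H) = 2·γ(G)`. -/
theorem domSet_of_semiPD_bigW {n : ℕ} (G : SimpleGraph (Fin n)) :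
    (∀ Dsp : Finset (WV n), IsSemiPD (bigW G) Dsp →
      ∃ D : Finset (Fin n), IsDomSet G D ∧ 2 * D.card ≤ Dsp.card) ∧
    2 * gamma G ≤ gammaPr2 (bigW G) ∧
    gammaPr2 (bigW G) = 2 * gamma G := by
  have halve : ∀ Dsp : Finset (WV n), IsSemiPD (bigW G) Dsp →
      ∃ D : Finset (Fin n), IsDomSet G D ∧ 2 * D.card ≤ Dsp.card :=
    fun _ h => exists_isDomSet_two_mul_card_le h.1
  obtain ⟨D, hD, hDcard⟩ := exists_isDomSet_card_eq_gamma G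
  have hS := isSemiPD_bigW_image_v1_union_image_v2 hD
  have hupper : gammaPr2 (bigW G) ≤ 2 * gamma G := by
    simpa [card_image_v1_union_image_v2, hDcard] using gammaPr2_le_card hS
  obtain ⟨Dsp, hDsp, hDspcard⟩ := exists_isSemiPD_card_eq_gammaPr2 hS
  obtain ⟨D', hD', hD'card⟩ := halve Dsp hDsp
  have hlower : 2 * gamma G ≤ gammaPr2 (bigW G) := by
    have := gamma_le_card hD'
    omega
  exact ⟨halve, hlower, le_antisymm hupper hlower⟩
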